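/- arXiv:1112.6115 — 5 statements merged into one kernel-verified Lean document; each statement's English description precedes it below -/
import Mathlib

section
/- Let G be a nilpotent group that is not abelian. Then G contains a subgroup isomorphic to the discrete Heisenberg group, i.e. there exist elements f, g, h in G with h ≠ 1 such that [f,g] = h and h commutes with both f and g. -/
/-!
Let `c ≥ 2` be the nilpotency class of `G` (it is not `≤ 1` because `G` is not abelian). The
last nontrivial term `γ_{c-1} = ⁅γ_{c-2}, G⁆` of the lower central series is central, since
`⁅γ_{c-1}, G⁆ = γ_c = 1`, and, being nontrivial, it contains a nontrivial commutator `⁅f, g⁆`.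
-/

open scoped commutatorElement

theorem Subgroup.exists_commutatorElement_ne_one_of_commutator_ne_bot {G : Type*} [Group G]
    {H K : Subgroup G} (hHK : ⁅H, K⁆ ≠ ⊥) : ∃ h ∈ H, ∃ k ∈ K, ⁅h, k⁆ ≠ 1 := by
  contrapose! hHK
  exact le_bot_iff.mp (commutator_le.mpr hHK)

theorem Subgroup.lowerCentralSeries_le_center_of_succ_eq_bot {G : Type*} [Group G] {n : ℕ}
    (h : (⊤ : Subgroup G).lowerCentralSeries (n + 1) = ⊥) :
    (⊤ : Subgroup G).lowerCentralSeries n ≤ center G := by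
  rw [← centralizer_univ, ← coe_top]
  exact commutator_eq_bot_iff_le_centralizer.mp h

theorem Group.IsNilpotent.exists_commutatorElement_ne_one_mem_center {G : Type*} [Group G]
    [Group.IsNilpotent G] (hG : ¬ IsMulCommutative G) :
    ∃ f g : G, ⁅f, g⁆ ≠ 1 ∧ ⁅f, g⁆ ∈ Subgroup.center G := by
  obtain ⟨k, hk⟩ : ∃ k, Group.nilpotencyClass G = k + 2 :=
    Nat.exists_eq_add_of_le' (not_le.mp (mt nilpotencyClass_le_one_iff.mp hG))
  have hbot : (⊤ : Subgroup G).lowerCentralSeries (k + 2) = ⊥ := by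
    rw [← hk, Subgroup.lowerCentralSeries_nilpotencyClass]
  have hne : (⊤ : Subgroup G).lowerCentralSeries (k + 1) ≠ ⊥ := by
    rw [Ne, Subgroup.lowerCentralSeries_eq_bot_iff_nilpotencyClass_le, hk]
    omega
  obtain ⟨f, hf, g, -, hfg⟩ := Subgroup.exists_commutatorElement_ne_one_of_commutator_ne_bot hne
  exact ⟨f, g, hfg, Subgroup.lowerCentralSeries_le_center_of_succ_eq_bot hbot
    (Subgroup.commutator_mem_commutator hf (Subgroup.mem_top g))⟩

/-- A nilpotent group that is not abelian contains a Heisenberg configuration: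
elements `f`, `g`, `h` with `h ≠ 1`, `⁅f,g⁆ = h`, and `h` commuting with `f` and `g`. -/
theorem stmt_0 (G : Type*) [Group G] [Group.IsNilpotent G]
    (hna : ¬ ∀ a b : G, a * b = b * a) :
    ∃ f g h : G, h ≠ 1 ∧ ⁅f, g⁆ = h ∧ Commute f h ∧ Commute g h := by
  obtain ⟨f, g, hfg, hcenter⟩ :=
    Group.IsNilpotent.exists_commutatorElement_ne_one_mem_center (isMulCommutative_iff.not.mpr hna)
  exact ⟨f, g, ⁅f, g⁆, hfg, rfl, Subgroup.mem_center_iff.mp hcenter f,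
    Subgroup.mem_center_iff.mp hcenter g⟩
end

section
/- A group acting freely on the real line by orientation-preserving homeomorphisms admits a left-invariant linear order; in particular, any group acting freely (every nontrivial element acts without fixed points) by orientation-preserving homeomorphisms of ℝ is torsion-free. -/
/-!
Fix a point `x₀`. Freeness makes the orbit map `g ↦ g(x₀)` injective, so the order of `ℝ`
pulls back to a linear order on the group, and it is left-invariant because every element acts
monotonically. In a left-ordered group an element `g > 1` has strictly increasing powers
(and `g < 1` reduces to `g⁻¹ > 1`), so no nontrivial element has finite order.
-/

section LeftOrdered

variable {G : Type*}

theorem not_isOfFinOrder_of_one_lt [Monoid G] [Preorder G] [MulLeftStrictMono G] {g : G}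
    (hg : 1 < g) : ¬IsOfFinOrder g :=
  not_isOfFinOrder_of_injective_pow (pow_right_strictMono' hg).injective

theorem not_isOfFinOrder_of_ne_one [Group G] [LinearOrder G] [MulLeftStrictMono G] {g : G}
    (hg : g ≠ 1) : ¬IsOfFinOrder g := by
  rcases hg.lt_or_gt with hlt | hgt
  · rw [← isOfFinOrder_inv_iff]
    exact not_isOfFinOrder_of_one_lt (Left.one_lt_inv_iff.mpr hlt)
  · exact not_isOfFinOrder_of_one_lt hgt

end LeftOrdered

namespace OrbitOrder

variable {G α : Type*} [Group G] [LinearOrder α] (φ : G →* (α ≃o α))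

theorem apply_injective_of_free (hfree : ∀ g : G, g ≠ 1 → ∀ x : α, φ g x ≠ x) (x₀ : α) :
    Function.Injective fun g => φ g x₀ := by
  intro a b (hab : φ a x₀ = φ b x₀)
  by_contra hne
  refine hfree (b⁻¹ * a) (by rwa [ne_eq, inv_mul_eq_one, eq_comm]) x₀ ?_
  rw [map_mul, RelIso.mul_apply, hab, map_inv, RelIso.inv_apply_self]

abbrev linearOrder {x₀ : α} (hinj : Function.Injective fun g => φ g x₀) : LinearOrder G :=
  LinearOrder.lift' _ hinj

theorem mulLeftStrictMono {x₀ : α} (hinj : Function.Injective fun g => φ g x₀) :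
    letI := linearOrder φ hinj
    MulLeftStrictMono G :=
  letI := linearOrder φ hinj
  ⟨fun a b c (hbc : φ b x₀ < φ c x₀) =>
    show φ (a * b) x₀ < φ (a * c) x₀ by
      rw [map_mul, map_mul, RelIso.mul_apply, RelIso.mul_apply]
      exact (φ a).strictMono hbc⟩

end OrbitOrder

/-- A group acting freely on `ℝ` by orientation-preserving homeomorphisms
(equivalently, order-isomorphisms of `ℝ`) admits a left-invariant linear order;
in particular it is torsion-free. -/
theorem stmt_1 (G : Type*) [Group G] (φ : G →* (ℝ ≃o ℝ))
    (hfree : ∀ g : G, g ≠ 1 → ∀ x : ℝ, φ g x ≠ x) :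
    (∃ r : G → G → Prop, IsStrictTotalOrder G r ∧
      ∀ a b c : G, r b c → r (a * b) (a * c)) ∧
    (∀ g : G, g ≠ 1 → ¬ IsOfFinOrder g) := by
  have hinj := OrbitOrder.apply_injective_of_free φ hfree 0
  let := OrbitOrder.linearOrder φ hinj
  have := OrbitOrder.mulLeftStrictMono φ hinj
  exact ⟨⟨(· < ·), inferInstance, fun a _ _ h => mul_lt_mul_right h a⟩,
    fun _ => not_isOfFinOrder_of_ne_one⟩
end

section
/- Every two-dimensional ideal of the Lie algebra u(4,ℝ) of strictly upper triangular real 4×4 matrices is of the form span(E₁₄, aE₁₃ + bE₂₄) for some real numbers a, b not both zero, where Eᵢⱼ are the elementary matrices. -/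
/-!
`u(4,ℝ)` is nilpotent: by Cayley–Hamilton its elements are nilpotent matrices, so Engel applies.
Hence a nonzero ideal meets the centre, which is the line `ℝ E₀₃`. Moreover the lower central
series of an ideal `I` decreases strictly until it vanishes, so `dim I = 2` gives
`⁅u, ⁅u, I⁆⁆ = 0`: every `⁅y, w⁆` with `w ∈ I` is central. Comparing matrix entries, this forces
the superdiagonal of `w` to vanish, so `I` is a plane in `span(E₀₂, E₀₃, E₁₃)` through `E₀₃`.
-/

open Matrix

attribute [local instance 100] LieRing.ofAssociativeRing

/-- The Lie algebra `u(n,ℝ)` of strictly upper triangular real `n × n` matrices,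
as a Lie subalgebra of the matrix algebra. -/
def u (n : ℕ) : LieSubalgebra ℝ (Matrix (Fin n) (Fin n) ℝ) where
  carrier := {A | ∀ i j : Fin n, ¬ i < j → A i j = 0}
  add_mem' := by
    intro A B hA hB i j hij
    simp [hA i j hij, hB i j hij]
  zero_mem' := by intro i j hij; simp
  smul_mem' := by
    intro c A hA i j hij
    simp [hA i j hij]
  lie_mem' := by
    intro A B hA hB i j hij
    have key : ∀ C D : Matrix (Fin n) (Fin n) ℝ,
        (∀ i j : Fin n, ¬ i < j → C i j = 0) → (∀ i j : Fin n, ¬ i < j → D i j = 0) →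
        (C * D) i j = 0 := by
      intro C D hC hD
      rw [Matrix.mul_apply]
      apply Finset.sum_eq_zero
      intro k _
      by_cases hik : i < k
      · rw [hD k j fun h' => hij (hik.trans h'), mul_zero]
      · rw [hC i k hik, zero_mul]
    rw [Ring.lie_def, Matrix.sub_apply, key A B hA hB, key B A hB hA, sub_zero]

/-- `E i j`, the elementary matrix with a `1` in position `(i,j)`, as an element
of `u(4,ℝ)` (for `i < j`). -/
def E (i j : Fin 4) (hij : i < j) : u 4 :=
  ⟨Matrix.single i j (1 : ℝ), by
    intro k l hkl
    rw [Matrix.single]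
    simp only [Matrix.of_apply]
    rw [if_neg]
    rintro ⟨rfl, rfl⟩
    exact hkl hij⟩

section Nilpotent

variable {R L M : Type*} [CommRing R] [LieRing L] [LieAlgebra R L] [AddCommGroup M] [Module R M]
  [LieRingModule L M] [LieModule R L M] [LieModule.IsNilpotent L M]

instance LieSubmodule.instIsNilpotent (N : LieSubmodule R L M) : LieModule.IsNilpotent L N :=
  have := (LieModule.isNilpotent_of_top_iff' (R := R) (L := L) (M := M)).2 ‹_›
  LieModule.isNilpotent_of_le R L M N ⊤ le_top

theorem LieSubmodule.lie_top_lt_self {N : LieSubmodule R L M} (hN : N ≠ ⊥) :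
    ⁅(⊤ : LieIdeal R L), N⁆ < N := by
  refine lt_of_le_of_ne (LieSubmodule.lie_le_right N ⊤) fun h => hN ?_
  obtain ⟨k, hk⟩ := N.isNilpotent_iff_exists_lcs_eq_bot.1 inferInstance
  have hlcs : ∀ n, N.lcs n = N := by
    intro n
    induction n with
    | zero => exact N.lcs_zero
    | succ n ih => rw [N.lcs_succ, ih, h]
  rw [← hk, hlcs]

theorem LieSubmodule.exists_ne_zero_forall_lie_eq_zero {N : LieSubmodule R L M} (hN : N ≠ ⊥) :
    ∃ m ∈ N, m ≠ 0 ∧ ∀ x : L, ⁅x, m⁆ = 0 := by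
  have : Nontrivial N := (LieSubmodule.nontrivial_iff_ne_bot R L M).2 hN
  have := LieModule.nontrivial_max_triv_of_isNilpotent R L N
  obtain ⟨⟨m, hm⟩, hm0⟩ := exists_ne (0 : LieModule.maxTrivSubmodule R L N)
  exact ⟨m, m.2, fun h => hm0 (Subtype.ext (Subtype.ext h)),
    fun x => congrArg Subtype.val (hm x)⟩

end Nilpotent

section FiniteDimensional

variable {K L M : Type*} [Field K] [LieRing L] [LieAlgebra K L] [AddCommGroup M] [Module K M]
  [LieRingModule L M] [LieModule K L M] [LieModule.IsNilpotent L M] [FiniteDimensional K M]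

theorem LieSubmodule.finrank_lcs_le (N : LieSubmodule K L M) (k : ℕ) :
    Module.finrank K (N.lcs k : Submodule K M) ≤ Module.finrank K N - k := by
  induction k with
  | zero => rw [N.lcs_zero]; exact le_rfl
  | succ k ih =>
    rw [N.lcs_succ]
    by_cases h : N.lcs k = ⊥
    · rw [h, LieSubmodule.lie_bot, LieSubmodule.bot_toSubmodule, finrank_bot]
      exact Nat.zero_le _
    · have := Submodule.finrank_lt_finrank_of_lt (LieSubmodule.lie_top_lt_self h)
      omega

theorem LieSubmodule.lcs_eq_bot_of_finrank_le (N : LieSubmodule K L M) {k : ℕ}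
    (hk : Module.finrank K N ≤ k) : N.lcs k = ⊥ := by
  rw [← LieSubmodule.toSubmodule_eq_bot, ← Submodule.finrank_eq_zero]
  have := N.finrank_lcs_le k
  omega

theorem LieSubmodule.lie_lie_eq_zero_of_finrank_le_two {N : LieSubmodule K L M}
    (hN : Module.finrank K N ≤ 2) {m : M} (hm : m ∈ N) (x y : L) : ⁅x, ⁅y, m⁆⁆ = 0 := by
  have h2 : ⁅(⊤ : LieIdeal K L), ⁅(⊤ : LieIdeal K L), N⁆⁆ = ⊥ :=
    N.lcs_eq_bot_of_finrank_le hN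
  have := LieSubmodule.lie_mem_lie (LieSubmodule.mem_top x)
    (LieSubmodule.lie_mem_lie (LieSubmodule.mem_top y) hm)
  rwa [h2, LieSubmodule.mem_bot] at this

end FiniteDimensional

section Subspaces

variable {K V : Type*} [Field K] [AddCommGroup V] [Module K V]

theorem Submodule.exists_mem_notMem_span_singleton {S : Submodule K V}
    (hS : 1 < Module.finrank K S) (e : V) : ∃ w ∈ S, w ∉ K ∙ e := by
  by_contra! h
  have := (Submodule.finrank_mono h).trans (finrank_span_le_card ({e} : Set V))
  simp only [Set.toFinset_singleton, Finset.card_singleton] at this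
  omega

theorem Submodule.eq_span_pair_of_finrank_eq_two [FiniteDimensional K V] {S : Submodule K V}
    (hS : Module.finrank K S = 2) {e w : V} (he : e ∈ S) (he0 : e ≠ 0) (hw : w ∈ S)
    (hwe : w ∉ K ∙ e) : S = span K {e, w} := by
  have hlt : K ∙ e < span K {e, w} :=
    lt_of_le_of_ne (span_mono (Set.singleton_subset_iff.2 (Set.mem_insert _ _))) fun h =>
      hwe (h ▸ subset_span (Set.mem_insert_of_mem _ rfl))
  have := finrank_lt_finrank_of_lt hlt
  rw [finrank_span_singleton he0] at this
  refine (eq_of_le_of_finrank_le ?_ (by omega)).symm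
  rw [span_le, Set.insert_subset_iff, Set.singleton_subset_iff]
  exact ⟨he, hw⟩

end Subspaces

theorem Matrix.isNilpotent_of_strictUpperTriangular {n R : Type*} [Fintype n] [LinearOrder n]
    [CommRing R] {M : Matrix n n R} (hM : ∀ i j, ¬ i < j → M i j = 0) : IsNilpotent M := by
  have hup : M.IsUpperTriangular := fun i j hij => hM i j (not_lt_of_gt hij)
  refine ⟨Fintype.card n, ?_⟩
  simpa [M.charpoly_of_isUpperTriangular hup, hM _ _ (lt_irrefl _)]
    using M.aeval_self_charpoly

instance instIsNilpotentU (n : ℕ) : LieRing.IsNilpotent (u n) := by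
  rw [LieAlgebra.isNilpotent_iff_forall (R := ℝ)]
  exact fun x =>
    LieAlgebra.isNilpotent_ad_of_isNilpotent (Matrix.isNilpotent_of_strictUpperTriangular x.2)

-- Indices are `0`-based: `E₀₃` is the paper's `E₁₄`.
local notation "E₀₁" => E 0 1 (by decide)
local notation "E₀₂" => E 0 2 (by decide)
local notation "E₀₃" => E 0 3 (by decide)
local notation "E₁₂" => E 1 2 (by decide)
local notation "E₁₃" => E 1 3 (by decide)
local notation "E₂₃" => E 2 3 (by decide)

theorem coe_E_apply {i j : Fin 4} (hij : i < j) (k l : Fin 4) :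
    (E i j hij : Matrix (Fin 4) (Fin 4) ℝ) k l = if i = k ∧ j = l then 1 else 0 := rfl

theorem lie_E_apply {i j : Fin 4} (hij : i < j) (x : u 4) (k l : Fin 4) :
    ⁅(E i j hij : Matrix (Fin 4) (Fin 4) ℝ), (x : Matrix (Fin 4) (Fin 4) ℝ)⁆ k l =
      (if k = i then x.1 j l else 0) - (if l = j then x.1 k i else 0) := by
  rw [Ring.lie_def, Matrix.sub_apply]
  congr 1 <;> split_ifs with h
  · simp [h, E]
  · exact single_mul_apply_of_ne _ _ _ _ _ h _
  · simp [h, E]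
  · exact mul_single_apply_of_ne _ _ _ _ _ h _

theorem u4_ext {x y : u 4} (h01 : x.1 0 1 = y.1 0 1) (h02 : x.1 0 2 = y.1 0 2)
    (h03 : x.1 0 3 = y.1 0 3) (h12 : x.1 1 2 = y.1 1 2) (h13 : x.1 1 3 = y.1 1 3)
    (h23 : x.1 2 3 = y.1 2 3) : x = y := by
  apply Subtype.ext
  ext i j
  fin_cases i <;> fin_cases j <;>
    first
    | assumption
    | exact (x.2 _ _ (by decide)).trans (y.2 _ _ (by decide)).symm

theorem eq_smul_E03_of_mem_center {x : u 4} (hx : x ∈ LieAlgebra.center ℝ (u 4)) :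
    x = x.1 0 3 • E₀₃ := by
  have h (y : u 4) (k l : Fin 4) : (⁅y, x⁆ : u 4).1 k l = 0 := by rw [hx y]; rfl
  apply u4_ext
  · simpa [lie_E_apply, coe_E_apply] using h E₁₂ 0 2
  · simpa [lie_E_apply, coe_E_apply] using h E₂₃ 0 3
  · simp [coe_E_apply]
  · simpa [lie_E_apply, coe_E_apply] using h E₀₁ 0 2
  · simpa [lie_E_apply, coe_E_apply] using h E₀₁ 0 3
  · simpa [lie_E_apply, coe_E_apply] using h E₁₂ 1 3

theorem E03_mem_of_ne_bot {I : LieIdeal ℝ (u 4)} (hI : I ≠ ⊥) : E₀₃ ∈ I := by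
  obtain ⟨x, hxI, hx0, hx⟩ := LieSubmodule.exists_ne_zero_forall_lie_eq_zero hI
  rw [eq_smul_E03_of_mem_center hx] at hxI hx0
  exact (I.toSubmodule.smul_mem_iff (left_ne_zero_of_smul hx0)).1 hxI

theorem superdiag_eq_zero_of_lie_mem_center {w : u 4}
    (hw : ∀ y : u 4, ⁅y, w⁆ ∈ LieAlgebra.center ℝ (u 4)) :
    w.1 0 1 = 0 ∧ w.1 1 2 = 0 ∧ w.1 2 3 = 0 := by
  have h (y : u 4) (k l : Fin 4) : (⁅y, w⁆ : u 4).1 k l = (⁅y, w⁆ : u 4).1 0 3 * (E₀₃).1 k l :=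
    congrArg (fun z : u 4 => z.1 k l) (eq_smul_E03_of_mem_center (hw y))
  refine ⟨?_, ?_, ?_⟩
  · simpa [lie_E_apply, coe_E_apply] using h E₁₂ 0 2
  · simpa [lie_E_apply, coe_E_apply] using h E₀₁ 0 2
  · simpa [lie_E_apply, coe_E_apply] using h E₁₂ 1 3

/-- Every two-dimensional ideal of `u(4,ℝ)` is of the form
`span(E₁₄, a·E₁₃ + b·E₂₄)` with `(a,b) ≠ (0,0)`. -/
theorem stmt_7 (I : LieIdeal ℝ (u 4)) (hI : Module.finrank ℝ I = 2) :
    ∃ a b : ℝ, ¬ (a = 0 ∧ b = 0) ∧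
      (I : Submodule ℝ (u 4)) =
        Submodule.span ℝ {E 0 3 (by decide), a • E 0 2 (by decide) + b • E 1 3 (by decide)} := by
  have hE03 : E₀₃ ∈ I := E03_mem_of_ne_bot <|
    (LieSubmodule.nontrivial_iff_ne_bot _ _ _).1 (Module.nontrivial_of_finrank_eq_succ hI)
  have hE03_ne : E₀₃ ≠ 0 := fun h => by
    simpa [coe_E_apply] using congrArg (fun z : u 4 => z.1 0 3) h
  obtain ⟨w, hwI, hw⟩ := Submodule.exists_mem_notMem_span_singleton (hI ▸ one_lt_two) E₀₃
  obtain ⟨h01, h12, h23⟩ := superdiag_eq_zero_of_lie_mem_center fun y x =>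
    I.lie_lie_eq_zero_of_finrank_le_two hI.le hwI x y
  set v := w - w.1 0 3 • E₀₃
  have hvI : v ∈ I := sub_mem hwI (I.smul_mem _ hE03)
  have hv : v ∉ ℝ ∙ E₀₃ := fun h => hw <| by
    have hc := (ℝ ∙ E₀₃).smul_mem (w.1 0 3) (Submodule.mem_span_singleton_self E₀₃)
    simpa [v] using add_mem h hc
  have hv_eq : v = w.1 0 2 • E₀₂ + w.1 1 3 • E₁₃ := by
    apply u4_ext <;> simp [v, coe_E_apply, h01, h12, h23]
  refine ⟨w.1 0 2, w.1 1 3, fun ⟨ha, hb⟩ => hv ?_, ?_⟩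
  · simp [hv_eq, ha, hb]
  · rw [← hv_eq]
    exact Submodule.eq_span_pair_of_finrank_eq_two hI hE03 hE03_ne hvI hv
end

section
/- Let G be a finitely generated torsion-free nilpotent group such that some finite-index subgroup Γ ≤ G is metabelian. Then G itself is metabelian. -/
/-!
In a torsion-free nilpotent group the factors of the upper central series are torsion-free,
hence `n`-th roots are unique, and `x` commutes with `g` as soon as it commutes with `g ^ n`
(`x * g * x⁻¹` and `g` have the same `n`-th power).

In any nilpotent group every element of `[G, G]` has a power in `[Γ, Γ]`: pass to `G ⧸ Z(G)`
by induction on the class and absorb the central error term by the transfer `G → Γᵃᵇ`, which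
kills `[G, G]` and sends a central `z` to the class of `z ^ [G : Γ]`. So `u, v ∈ [G, G]` have
powers in the abelian group `[Γ, Γ]`; these powers commute, hence so do `u` and `v`.
-/

open Subgroup
open scoped commutatorElement

section TorsionFreeNilpotent

variable {G : Type*} [Group G]

lemma commutatorElement_pow_left_of_mem_center {g x : G} (h : ⁅g, x⁆ ∈ center G) (n : ℕ) :
    ⁅g ^ n, x⁆ = ⁅g, x⁆ ^ n := by
  induction n with
  | zero => simp
  | succ n ih =>
    have hconj : g * ⁅g, x⁆ ^ n * g⁻¹ = ⁅g, x⁆ ^ n := by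
      rw [mem_center_iff.mp (pow_mem h n) g, mul_inv_cancel_right]
    calc ⁅g ^ (n + 1), x⁆ = g * ⁅g ^ n, x⁆ * g⁻¹ * ⁅g, x⁆ := by group
      _ = ⁅g, x⁆ ^ (n + 1) := by rw [ih, hconj, pow_succ]

lemma mk_mem_center_of_mem_upperCentralSeries_succ {j : ℕ} {g : G}
    (hg : g ∈ Subgroup.upperCentralSeries G (j + 1)) :
    QuotientGroup.mk' (Subgroup.upperCentralSeries G j) g ∈
      center (G ⧸ Subgroup.upperCentralSeries G j) := by
  rw [← mem_comap, ← Subgroup.upperCentralSeriesStep_eq_comap_center]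
  exact hg

lemma eq_one_of_pow_eq_one (htf : ∀ g : G, g ≠ 1 → ¬ IsOfFinOrder g) {g : G} {n : ℕ}
    (hn : n ≠ 0) (hgn : g ^ n = 1) : g = 1 := by
  by_contra hg
  exact htf g hg (isOfFinOrder_iff_pow_eq_one.mpr ⟨n, Nat.pos_of_ne_zero hn, hgn⟩)

/-- `⁅g, x⁆ ^ n ≡ ⁅g ^ n, x⁆ ≡ 1` modulo the previous term, so induction on `j` applies
to `⁅g, x⁆`. -/
lemma mem_upperCentralSeries_of_pow_mem_of_mem_succ (htf : ∀ g : G, g ≠ 1 → ¬ IsOfFinOrder g)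
    {n : ℕ} (hn : n ≠ 0) :
    ∀ {j : ℕ} {g : G}, g ∈ Subgroup.upperCentralSeries G (j + 1) →
      g ^ n ∈ Subgroup.upperCentralSeries G j → g ∈ Subgroup.upperCentralSeries G j
  | 0, g, _, hgn => by
    rw [Subgroup.upperCentralSeries_zero, mem_bot] at hgn ⊢
    exact eq_one_of_pow_eq_one htf hn hgn
  | j + 1, g, hg, hgn => Subgroup.mem_upperCentralSeries_succ_iff.mpr fun x => by
    have hgx := Subgroup.mem_upperCentralSeries_succ_iff.mp hg x
    refine mem_upperCentralSeries_of_pow_mem_of_mem_succ htf hn hgx ?_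
    set π := QuotientGroup.mk' (Subgroup.upperCentralSeries G j)
    have hcomm : ⁅π g, π x⁆ ∈ center _ := by
      rw [← map_commutatorElement]
      exact mk_mem_center_of_mem_upperCentralSeries_succ hgx
    have hpow : ⁅π g ^ n, π x⁆ = 1 := by
      rw [commutatorElement_eq_one_iff_mul_comm, ← map_pow]
      exact (mem_center_iff.mp (mk_mem_center_of_mem_upperCentralSeries_succ hgn) _).symm
    rw [← QuotientGroup.eq_one_iff, ← QuotientGroup.mk'_apply, map_pow, map_commutatorElement,
      ← commutatorElement_pow_left_of_mem_center hcomm, hpow]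

lemma mem_upperCentralSeries_of_pow_mem [Group.IsNilpotent G]
    (htf : ∀ g : G, g ≠ 1 → ¬ IsOfFinOrder g) {n : ℕ} (hn : n ≠ 0) {j : ℕ} {g : G}
    (hgn : g ^ n ∈ Subgroup.upperCentralSeries G j) : g ∈ Subgroup.upperCentralSeries G j := by
  suffices ∀ d, g ∈ Subgroup.upperCentralSeries G (j + d) →
      g ∈ Subgroup.upperCentralSeries G j by
    apply this (Group.nilpotencyClass G)
    rw [Subgroup.upperCentralSeries_eq_top_iff_nilpotencyClass_le.mpr (Nat.le_add_left _ _)]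
    trivial
  intro d
  induction d with
  | zero => exact id
  | succ d ih =>
    exact fun hg => ih (mem_upperCentralSeries_of_pow_mem_of_mem_succ htf hn hg
      (Subgroup.upperCentralSeries_mono G (Nat.le_add_right j d) hgn))

lemma not_isOfFinOrder_quotient_center [Group.IsNilpotent G]
    (htf : ∀ g : G, g ≠ 1 → ¬ IsOfFinOrder g) :
    ∀ q : G ⧸ center G, q ≠ 1 → ¬ IsOfFinOrder q := by
  intro q hq hfin
  induction q using QuotientGroup.induction_on with
  | H g =>
    obtain ⟨n, hn, hgn⟩ := isOfFinOrder_iff_pow_eq_one.mp hfin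
    rw [← QuotientGroup.mk_pow, QuotientGroup.eq_one_iff,
      ← Subgroup.upperCentralSeries_one] at hgn
    have := mem_upperCentralSeries_of_pow_mem htf hn.ne' hgn
    rw [Subgroup.upperCentralSeries_one, ← QuotientGroup.eq_one_iff] at this
    exact hq this

/-- `IsMulTorsionFree` asks for injectivity of `x ↦ x ^ n`, which for non-commutative groups is
stronger than the absence of torsion. -/
theorem isMulTorsionFree_of_isNilpotent [Group.IsNilpotent G]
    (htf : ∀ g : G, g ≠ 1 → ¬ IsOfFinOrder g) : IsMulTorsionFree G := by
  revert htf
  refine Group.nilpotent_center_quotient_ind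
    (P := fun G _ _ => (∀ g : G, g ≠ 1 → ¬ IsOfFinOrder g) → IsMulTorsionFree G) G
    (fun _ _ _ _ => inferInstance) fun G _ _ ih htf => ?_
  have := ih (not_isOfFinOrder_quotient_center htf)
  refine ⟨fun n hn x y hxy => ?_⟩
  have hz : x⁻¹ * y ∈ center G := by
    rw [← QuotientGroup.eq]
    exact pow_left_injective hn (by simp only [← QuotientGroup.mk_pow]; exact congrArg _ hxy)
  obtain ⟨z, hz', rfl⟩ : ∃ z ∈ center G, y = x * z := ⟨_, hz, by group⟩
  have hxz : Commute x z := mem_center_iff.mp hz' x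
  have hzn : z ^ n = 1 := by simpa [hxz.mul_pow] using hxy.symm
  simp [eq_one_of_pow_eq_one htf hn hzn]

lemma Commute.of_pow_right [IsMulTorsionFree G] {x g : G} {n : ℕ} (hn : n ≠ 0)
    (h : Commute x (g ^ n)) : Commute x g := by
  have : (x * g * x⁻¹) ^ n = g ^ n := by rw [conj_pow, h.eq, mul_inv_cancel_right]
  exact mul_inv_eq_iff_eq_mul.mp (pow_left_injective hn this)

end TorsionFreeNilpotent

section CommutatorPowers

variable {G : Type*} [Group G]

lemma pow_index_mem_commutator_of_mem_center {Γ : Subgroup G} [Γ.FiniteIndex] {z : G}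
    (hz : z ∈ center G) (hz' : z ∈ commutator G) : z ^ Γ.index ∈ ⁅Γ, Γ⁆ := by
  let ϕ : Γ →* Abelianization Γ := Abelianization.of
  have hkey : ∀ (k : ℕ) (g₀ : G), g₀⁻¹ * z ^ k * g₀ ∈ Γ → g₀⁻¹ * z ^ k * g₀ = z ^ k :=
    fun k g₀ _ => by rw [mem_center_iff.mp (pow_mem hz k) g₀⁻¹, inv_mul_cancel_right]
  have hone : ϕ ⟨z ^ Γ.index, _⟩ = 1 :=
    (MonoidHom.transfer_eq_pow ϕ z hkey).symm.trans
      (Abelianization.commutator_subset_ker _ hz')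
  rw [← map_subtype_commutator, ← Abelianization.ker_of]
  exact ⟨_, hone, rfl⟩

lemma Subgroup.FiniteIndex.map_of_surjective {G' : Type*} [Group G'] {f : G →* G'}
    (hf : Function.Surjective f) (Γ : Subgroup G) [Γ.FiniteIndex] : (Γ.map f).FiniteIndex :=
  ⟨fun h => FiniteIndex.index_ne_zero (Nat.eq_zero_of_zero_dvd (h ▸ Γ.index_map_dvd hf))⟩

theorem exists_pow_mem_commutator_of_finiteIndex [Group.IsNilpotent G] (Γ : Subgroup G)
    [Γ.FiniteIndex] {u : G} (hu : u ∈ commutator G) : ∃ m ≠ 0, u ^ m ∈ ⁅Γ, Γ⁆ := by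
  revert Γ u
  refine Group.nilpotent_center_quotient_ind
    (P := fun G _ _ => ∀ (Γ : Subgroup G) [Γ.FiniteIndex] {u : G}, u ∈ commutator G →
      ∃ m ≠ 0, u ^ m ∈ ⁅Γ, Γ⁆) G (fun G _ _ Γ _ u _ => ⟨1, one_ne_zero, ?_⟩)
    fun G _ _ ih Γ _ u hu => ?_
  · rw [Subsingleton.elim u 1, one_pow]
    exact one_mem _
  · let π := QuotientGroup.mk' (center G)
    have := FiniteIndex.map_of_surjective (QuotientGroup.mk'_surjective (center G)) Γ
    obtain ⟨m, hm, hum⟩ := ih (Γ.map π) (u := π u)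
      (commutator_mono le_top le_top ((map_commutator_eq G π).le (mem_map_of_mem π hu)))
    rw [← map_commutator, ← map_pow] at hum
    obtain ⟨h, hh, hhu⟩ := hum
    have hz : h⁻¹ * u ^ m ∈ center G := (QuotientGroup.eq (s := center G)).mp hhu
    have hz' : h⁻¹ * u ^ m ∈ commutator G :=
      mul_mem (inv_mem (commutator_mono le_top le_top hh)) (pow_mem hu m)
    have hcomm : Commute h (h⁻¹ * u ^ m) := mem_center_iff.mp hz h
    refine ⟨m * Γ.index, mul_ne_zero hm FiniteIndex.index_ne_zero, ?_⟩
    rw [pow_mul, ← mul_inv_cancel_left h (u ^ m), hcomm.mul_pow]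
    exact mul_mem (pow_mem hh _) (pow_index_mem_commutator_of_mem_center hz hz')

end CommutatorPowers

theorem stmt_11_general (G : Type*) [Group G]
    (hnil : Group.IsNilpotent G)
    (htf : ∀ g : G, g ≠ 1 → ¬ IsOfFinOrder g)
    (Γ : Subgroup G) (hfi : Γ.FiniteIndex)
    (hmeta : ∀ x ∈ commutator Γ, ∀ y ∈ commutator Γ, x * y = y * x) :
    ∀ x ∈ commutator G, ∀ y ∈ commutator G, x * y = y * x := by
  have := isMulTorsionFree_of_isNilpotent htf
  intro u hu v hv
  obtain ⟨m, hm, hum⟩ := exists_pow_mem_commutator_of_finiteIndex Γ hu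
  obtain ⟨n, hn, hvn⟩ := exists_pow_mem_commutator_of_finiteIndex Γ hv
  rw [← map_subtype_commutator] at hum hvn
  obtain ⟨a, ha, hau⟩ := hum
  obtain ⟨b, hb, hbv⟩ := hvn
  have hpow : Commute (u ^ m) (v ^ n) := by
    rw [← hau, ← hbv]
    exact congrArg Subtype.val (hmeta a ha b hb)
  exact ((hpow.of_pow_right hn).symm.of_pow_right hm).symm

/-- A finitely generated torsion-free nilpotent group possessing a metabelian
subgroup of finite index is itself metabelian. -/
theorem stmt_11 (G : Type*) [Group G] (hfg : Group.FG G)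
    (hnil : Group.IsNilpotent G)
    (htf : ∀ g : G, g ≠ 1 → ¬ IsOfFinOrder g)
    (Γ : Subgroup G) (hfi : Γ.FiniteIndex)
    (hmeta : ∀ x ∈ commutator Γ, ∀ y ∈ commutator Γ, x * y = y * x) :
    ∀ x ∈ commutator G, ∀ y ∈ commutator G, x * y = y * x :=
  stmt_11_general G hnil htf Γ hfi hmeta
end

section
/- Hölder's theorem: a group acting freely by orientation-preserving homeomorphisms of the real line embeds into the additive group (ℝ, +); in particular it is abelian. -/
/-!
Order `G` by `g ≤ h ↔ φ g 0 ≤ φ h 0`. Freeness and the intermediate value theorem force each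
`φ g`, `g ≠ 1`, to lie strictly above or strictly below the diagonal, so comparing two elements
at `0` compares them everywhere: the order is invariant under multiplication on both sides. It
is Archimedean because a bounded increasing orbit would converge to a fixed point.

A bi-invariant Archimedean order forces commutativity (Hölder): if `1 < ⁅a, b⁆`, then either
`G` is generated by its least element `> 1`, or some `ε > 1` has `ε * ε ≤ ⁅a, b⁆`, and
trapping `a` and `b` between consecutive powers of `ε` gives `⁅a, b⁆ < ε * ε`. For abelian
groups the embedding into `ℝ` is `Archimedean.exists_orderAddMonoidHom_real_injective`.
-/

open Function Filter commutatorElement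

theorem Real.forall_lt_or_forall_gt_of_forall_ne {f : ℝ → ℝ} (hf : Continuous f)
    (hfix : ∀ x, f x ≠ x) : (∀ x, x < f x) ∨ ∀ x, f x < x := by
  by_contra! h
  obtain ⟨⟨x, hx⟩, ⟨y, hy⟩⟩ := h
  obtain ⟨z, hz⟩ := intermediate_value_univ x y (hf.sub continuous_id)
    ⟨sub_nonpos.2 hx, sub_nonneg.2 hy⟩
  exact hfix z (sub_eq_zero.1 hz)

theorem tendsto_iterate_atTop_of_forall_lt {α : Type*} [ConditionallyCompleteLinearOrder α]
    [TopologicalSpace α] [OrderTopology α] {f : α → α} (hf : Continuous f)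
    (hlt : ∀ x, x < f x) (x : α) : Tendsto (fun n => f^[n] x) atTop atTop := by
  have hmono : Monotone fun n => f^[n] x :=
    monotone_nat_of_le_succ fun n => by rw [iterate_succ_apply']; exact (hlt _).le
  refine (tendsto_atTop_of_monotone hmono).resolve_right ?_
  rintro ⟨y, hy⟩
  exact (hlt y).ne' (isFixedPt_of_tendsto_iterate hy hf.continuousAt)

theorem zpow_right_strictMono_of_one_lt {G : Type*} [Group G] [PartialOrder G] [MulLeftMono G]
    {a : G} (ha : 1 < a) : StrictMono fun n : ℤ => a ^ n :=
  strictMono_int_of_lt_succ fun n => by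
    simpa [zpow_add_one] using lt_mul_of_one_lt_right' (a ^ n) ha

section BiorderedGroup

variable {G : Type*} [Group G] [LinearOrder G] [MulLeftMono G] [MulRightMono G]

theorem exists_zpow_le_and_lt_zpow_add_one
    (harch : ∀ (x : G) {y : G}, 1 < y → ∃ n : ℕ, x ≤ y ^ n)
    {ε : G} (hε : 1 < ε) (g : G) : ∃ p : ℤ, ε ^ p ≤ g ∧ g < ε ^ (p + 1) := by
  have hmono := zpow_right_strictMono_of_one_lt hε
  obtain ⟨n, hn⟩ := harch g hε
  obtain ⟨m, hm⟩ := harch g⁻¹ hε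
  obtain ⟨p, hp, hmax⟩ := Int.exists_greatest_of_bdd (P := fun p => ε ^ p ≤ g)
    ⟨n, fun z hz => hmono.le_iff_le.1 (by simpa using hz.trans hn)⟩
    ⟨-m, by simpa using inv_le_of_inv_le' hm⟩
  exact ⟨p, hp, lt_of_not_ge fun h => (lt_add_one p).not_ge (hmax _ h)⟩

theorem exists_eq_zpow_of_forall_one_lt_le
    (harch : ∀ (x : G) {y : G}, 1 < y → ∃ n : ℕ, x ≤ y ^ n)
    {m : G} (hm : 1 < m) (hmin : ∀ u, 1 < u → m ≤ u) (g : G) : ∃ p : ℤ, g = m ^ p := by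
  obtain ⟨p, hp, hp'⟩ := exists_zpow_le_and_lt_zpow_add_one harch hm g
  refine ⟨p, (inv_mul_eq_one.1 ?_).symm⟩
  have h1 : 1 ≤ (m ^ p)⁻¹ * g := le_inv_mul_iff_mul_le.2 (by simpa using hp)
  have h2 : (m ^ p)⁻¹ * g < m := inv_mul_lt_iff_lt_mul.2 (by rwa [← zpow_add_one])
  exact h1.eq_or_lt.resolve_right (fun h => (hmin _ h).not_gt h2) |>.symm

theorem exists_one_lt_mul_self_le (hdense : ∀ m : G, 1 < m → ∃ u, 1 < u ∧ u < m)
    {c : G} (hc : 1 < c) : ∃ ε, 1 < ε ∧ ε * ε ≤ c := by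
  obtain ⟨δ, hδ, hδc⟩ := hdense c hc
  refine ⟨min δ (δ⁻¹ * c), lt_min hδ (lt_inv_mul_iff_mul_lt.2 (by simpa using hδc)), ?_⟩
  calc min δ (δ⁻¹ * c) * min δ (δ⁻¹ * c) ≤ δ * (δ⁻¹ * c) :=
        mul_le_mul' (min_le_left _ _) (min_le_right _ _)
    _ = c := mul_inv_cancel_left δ c

theorem not_one_lt_commutatorElement
    (harch : ∀ (x : G) {y : G}, 1 < y → ∃ n : ℕ, x ≤ y ^ n)
    (a b : G) : ¬ (1 : G) < ⁅a, b⁆ := by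
  intro hc
  by_cases hdiscrete : ∃ m : G, 1 < m ∧ ∀ u, 1 < u → m ≤ u
  · obtain ⟨m, hm, hmin⟩ := hdiscrete
    obtain ⟨p, rfl⟩ := exists_eq_zpow_of_forall_one_lt_le harch hm hmin a
    obtain ⟨q, rfl⟩ := exists_eq_zpow_of_forall_one_lt_le harch hm hmin b
    rw [commutatorElement_eq_one_iff_commute.2 (Commute.zpow_zpow_self m p q)] at hc
    exact hc.false
  push Not at hdiscrete
  obtain ⟨ε, hε, hεc⟩ := exists_one_lt_mul_self_le hdiscrete hc
  obtain ⟨p, hpa, hap⟩ := exists_zpow_le_and_lt_zpow_add_one harch hε a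
  obtain ⟨q, hqb, hbq⟩ := exists_zpow_le_and_lt_zpow_add_one harch hε b
  have hlt : ⁅a, b⁆ < ε ^ (p + 1) * ε ^ (q + 1) * ε ^ (-p) * ε ^ (-q) := by
    rw [commutatorElement_def]
    refine mul_lt_mul_of_lt_of_le (mul_lt_mul_of_lt_of_le (mul_lt_mul_of_lt_of_lt hap hbq) ?_) ?_
    · simpa using inv_le_inv_iff.2 hpa
    · simpa using inv_le_inv_iff.2 hqb
  refine hεc.not_gt (hlt.trans_eq ?_)
  simp only [← zpow_add]
  rw [show p + 1 + (q + 1) + -p + -q = 2 by ring, zpow_two]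

theorem commute_of_archimedean
    (harch : ∀ (x : G) {y : G}, 1 < y → ∃ n : ℕ, x ≤ y ^ n)
    (a b : G) : Commute a b := by
  refine commutatorElement_eq_one_iff_commute.1 (le_antisymm ?_ ?_)
  · exact not_lt.1 (not_one_lt_commutatorElement harch a b)
  · rw [← commutatorElement_inv, one_le_inv']
    exact not_lt.1 (not_one_lt_commutatorElement harch b a)

theorem exists_injective_monoidHom_real_of_archimedean
    (harch : ∀ (x : G) {y : G}, 1 < y → ∃ n : ℕ, x ≤ y ^ n) :
    ∃ ψ : G →* Multiplicative ℝ, Injective ψ := by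
  let _ : CommGroup G := { ‹Group G› with mul_comm := commute_of_archimedean harch }
  have : IsOrderedMonoid G := { mul_le_mul_left := fun _ _ h _ => mul_le_mul' h le_rfl }
  have : MulArchimedean G := ⟨harch⟩
  obtain ⟨f, hf⟩ := Archimedean.exists_orderAddMonoidHom_real_injective (Additive G)
  exact ⟨AddMonoidHom.toMultiplicativeRight f, hf⟩

end BiorderedGroup

section FreeAction

variable {G : Type*} [Group G]

theorem apply_mul_apply {α : Type*} [LE α] (φ : G →* α ≃o α) (g h : G) (x : α) :
    φ (g * h) x = φ g (φ h x) := by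
  rw [map_mul, RelIso.mul_apply]

theorem apply_pow_apply {α : Type*} [LE α] (φ : G →* α ≃o α) (g : G) (n : ℕ) (x : α) :
    φ (g ^ n) x = (φ g)^[n] x := by
  induction n with
  | zero => simp [RelIso.one_apply]
  | succ n ih => rw [pow_succ', apply_mul_apply, ih, iterate_succ_apply']

variable {φ : G →* ℝ ≃o ℝ}

theorem eq_of_apply_eq (hfree : ∀ g : G, g ≠ 1 → ∀ x : ℝ, φ g x ≠ x)
    {g h : G} {x : ℝ} (hx : φ g x = φ h x) : g = h := by
  by_contra hne
  refine hfree (h⁻¹ * g) (by rwa [Ne, inv_mul_eq_one, eq_comm]) x ?_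
  rw [apply_mul_apply, hx, ← apply_mul_apply, inv_mul_cancel, map_one, RelIso.one_apply]

theorem forall_lt_apply_of_lt_apply (hfree : ∀ g : G, g ≠ 1 → ∀ x : ℝ, φ g x ≠ x)
    {g : G} {x : ℝ} (hx : x < φ g x) (y : ℝ) : y < φ g y := by
  have hg : g ≠ 1 := by rintro rfl; simp [RelIso.one_apply] at hx
  exact ((Real.forall_lt_or_forall_gt_of_forall_ne (φ g).continuous (hfree g hg)).resolve_right
    fun h => (h x).not_gt hx) y

theorem apply_lt_apply_of_apply_lt_apply (hfree : ∀ g : G, g ≠ 1 → ∀ x : ℝ, φ g x ≠ x)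
    {g h : G} {x : ℝ} (hx : φ g x < φ h x) (y : ℝ) : φ g y < φ h y := by
  have hx' : x < φ (g⁻¹ * h) x := by
    simpa [apply_mul_apply] using (φ g)⁻¹.strictMono hx
  have := (φ g).strictMono (forall_lt_apply_of_lt_apply hfree hx' y)
  rwa [← apply_mul_apply, mul_inv_cancel_left] at this

theorem apply_le_apply_of_apply_le_apply (hfree : ∀ g : G, g ≠ 1 → ∀ x : ℝ, φ g x ≠ x)
    {g h : G} {x : ℝ} (hx : φ g x ≤ φ h x) (y : ℝ) : φ g y ≤ φ h y := by
  rcases hx.eq_or_lt with hx | hx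
  · rw [eq_of_apply_eq hfree hx]
  · exact (apply_lt_apply_of_apply_lt_apply hfree hx y).le

theorem exists_lt_apply_pow (hfree : ∀ g : G, g ≠ 1 → ∀ x : ℝ, φ g x ≠ x)
    {g : G} {x : ℝ} (hx : x < φ g x) (y : ℝ) : ∃ n : ℕ, y < φ (g ^ n) x := by
  simp only [apply_pow_apply]
  exact ((tendsto_iterate_atTop_of_forall_lt (φ g).continuous
    (forall_lt_apply_of_lt_apply hfree hx) x).eventually_gt_atTop y).exists

end FreeAction

/-- Hölder's theorem: a group acting freely on `ℝ` by orientation-preserving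
homeomorphisms (order-isomorphisms of `ℝ`) embeds into `(ℝ, +)`; in particular
it is abelian. -/
theorem stmt_18 (G : Type*) [Group G] (φ : G →* (ℝ ≃o ℝ))
    (hfree : ∀ g : G, g ≠ 1 → ∀ x : ℝ, φ g x ≠ x) :
    (∃ ψ : G →* Multiplicative ℝ, Function.Injective ψ) ∧
    (∀ a b : G, a * b = b * a) := by
  let _ : LinearOrder G := LinearOrder.lift' (fun g => φ g 0) fun _ _ => eq_of_apply_eq hfree
  have : MulLeftMono G := ⟨fun c a b (h : φ a 0 ≤ φ b 0) =>
    show φ (c * a) 0 ≤ φ (c * b) 0 by simpa only [apply_mul_apply] using (φ c).monotone h⟩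
  have : MulRightMono G := ⟨fun c a b (h : φ a 0 ≤ φ b 0) =>
    show φ (a * c) 0 ≤ φ (b * c) 0 by
      simpa only [apply_mul_apply] using apply_le_apply_of_apply_le_apply hfree h (φ c 0)⟩
  have harch (x : G) {y : G} (hy : 1 < y) : ∃ n : ℕ, x ≤ y ^ n := by
    change φ 1 0 < φ y 0 at hy
    obtain ⟨n, hn⟩ := exists_lt_apply_pow hfree (by simpa [RelIso.one_apply] using hy) (φ x 0)
    exact ⟨n, hn.le⟩
  obtain ⟨ψ, hψ⟩ := exists_injective_monoidHom_real_of_archimedean harch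
  exact ⟨⟨ψ, hψ⟩, fun a b => hψ (by rw [map_mul, map_mul, mul_comm])⟩
end
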